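/- arXiv:1404.5190 — 2 statements merged into one kernel-verified Lean document; each statement's English description precedes it below -/
import Mathlib

section
/- Let A be a dictionary with coherence μ < 1/(k−1) for an integer k > 1. Then the generalized coherence of degree k satisfies μ_k(A) ≤ kμ/(1 − (k−1)μ). -/
/-!
Write the unit vectors as `u = ∑_{i ∈ I} f i • A i` and `v = ∑_{j ∈ J} g j • A j`. As `I` and `J`
are disjoint, every term of `⟪u, v⟫` is controlled by the coherence, so
`|⟪u, v⟫| ≤ μ ‖f‖₁ ‖g‖₁`. Expanding `‖u‖² = 1` through the Gram matrix and using
`‖f‖₁² ≤ k ‖f‖₂²` gives `(1 - (k - 1) μ) ‖f‖₁² ≤ k`; the same holds for `g`, and the two bounds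
combine to `|⟪u, v⟫| ≤ k μ / (1 - (k - 1) μ)`.
-/

/-- Generalized coherence of degree `k`: the supremum of `|⟨u,v⟩|` over unit vectors `u, v`
lying in the spans of two disjoint sets of at most `k` columns of `A`. -/
noncomputable def genCoherence {m N : ℕ} (A : Fin N → EuclideanSpace ℝ (Fin m)) (k : ℕ) : ℝ :=
  sSup {r : ℝ | ∃ I J : Finset (Fin N), I.card ≤ k ∧ J.card ≤ k ∧ Disjoint I J ∧
    ∃ u ∈ Submodule.span ℝ (A '' I), ∃ v ∈ Submodule.span ℝ (A '' J),
      ‖u‖ = 1 ∧ ‖v‖ = 1 ∧ r = |(inner ℝ u v : ℝ)|}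

open Finset RealInnerProductSpace

lemma one_sub_mul_pos_of_lt_one_div {a μ : ℝ} (hμ0 : 0 ≤ μ) (hμ : μ < 1 / a) :
    0 < 1 - a * μ := by
  rcases le_or_gt a 0 with ha | ha
  · nlinarith
  · have := (lt_div_iff₀ ha).mp hμ
    linarith

section Coherence

variable {ι E : Type*} [NormedAddCommGroup E] [InnerProductSpace ℝ E] {v : ι → E} {μ : ℝ}

lemma inner_sum_smul_sum_smul (s t : Finset ι) (f g : ι → ℝ) :
    ⟪∑ i ∈ s, f i • v i, ∑ j ∈ t, g j • v j⟫ = ∑ i ∈ s, ∑ j ∈ t, f i * g j * ⟪v i, v j⟫ := by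
  simp_rw [sum_inner, inner_sum, real_inner_smul_left, real_inner_smul_right, mul_assoc]

lemma abs_inner_sum_smul_sum_smul_le {s t : Finset ι}
    (hμ : ∀ i ∈ s, ∀ j ∈ t, |⟪v i, v j⟫| ≤ μ) (f g : ι → ℝ) :
    |⟪∑ i ∈ s, f i • v i, ∑ j ∈ t, g j • v j⟫| ≤ μ * ((∑ i ∈ s, |f i|) * ∑ j ∈ t, |g j|) := by
  rw [inner_sum_smul_sum_smul, sum_mul_sum, mul_sum]
  refine (abs_sum_le_sum_abs _ _).trans (sum_le_sum fun i hi => ?_)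
  rw [mul_sum]
  refine (abs_sum_le_sum_abs _ _).trans (sum_le_sum fun j hj => ?_)
  rw [abs_mul, abs_mul, mul_comm μ]
  exact mul_le_mul_of_nonneg_left (hμ i hi j hj) (by positivity)

/-- In the Gram expansion of `‖∑ f i • v i‖ ^ 2` the diagonal terms are `f i ^ 2` and the
off-diagonal ones are at least `-μ |f i| |f j|`; the extra `μ ∑ f i ^ 2` compensates for the
diagonal of `(∑ |f i|) ^ 2`. -/
lemma one_add_mul_sum_sq_sub_le_norm_sq (hv : ∀ i, ‖v i‖ = 1)
    (hμ : Pairwise fun i j => |⟪v i, v j⟫| ≤ μ) (s : Finset ι) (f : ι → ℝ) :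
    (1 + μ) * ∑ i ∈ s, f i ^ 2 - μ * (∑ i ∈ s, |f i|) ^ 2 ≤ ‖∑ i ∈ s, f i • v i‖ ^ 2 := by
  classical
  have hterm : ∀ i j, (if i = j then (1 + μ) * f i ^ 2 else 0) - μ * (|f i| * |f j|)
      ≤ f i * f j * ⟪v i, v j⟫ := by
    intro i j
    split_ifs with hij
    · subst hij
      rw [real_inner_self_eq_norm_sq, hv, abs_mul_abs_self]
      exact le_of_eq (by ring)
    · have hcross : |f i * f j * ⟪v i, v j⟫| ≤ μ * (|f i| * |f j|) := by
        rw [abs_mul, abs_mul, mul_comm μ]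
        exact mul_le_mul_of_nonneg_left (hμ hij) (by positivity)
      linarith [neg_abs_le (f i * f j * ⟪v i, v j⟫)]
  rw [← real_inner_self_eq_norm_sq, inner_sum_smul_sum_smul, sq, sum_mul_sum, mul_sum, mul_sum]
  calc _ = ∑ i ∈ s, ∑ j ∈ s,
        ((if i = j then (1 + μ) * f i ^ 2 else 0) - μ * (|f i| * |f j|)) := by
        simp only [sum_sub_distrib, sum_ite_eq, mul_sum]
        rw [sum_ite_mem, inter_self]
    _ ≤ _ := sum_le_sum fun i _ => sum_le_sum fun j _ => hterm i j

lemma mul_sq_sum_abs_le_mul_norm_sq (hv : ∀ i, ‖v i‖ = 1)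
    (hμ : Pairwise fun i j => |⟪v i, v j⟫| ≤ μ) (hμ0 : 0 ≤ μ) {s : Finset ι} {k : ℕ}
    (hs : #s ≤ k) (f : ι → ℝ) :
    (1 - ((k : ℝ) - 1) * μ) * (∑ i ∈ s, |f i|) ^ 2 ≤ k * ‖∑ i ∈ s, f i • v i‖ ^ 2 := by
  have hgram := one_add_mul_sum_sq_sub_le_norm_sq hv hμ s f
  have hcs : (∑ i ∈ s, |f i|) ^ 2 ≤ k * ∑ i ∈ s, f i ^ 2 := by
    calc (∑ i ∈ s, |f i|) ^ 2 ≤ #s * ∑ i ∈ s, |f i| ^ 2 := sq_sum_le_card_mul_sum_sq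
      _ ≤ k * ∑ i ∈ s, f i ^ 2 := by
        simp only [sq_abs]
        gcongr
  linarith [mul_le_mul_of_nonneg_left hgram k.cast_nonneg,
    mul_le_mul_of_nonneg_left hcs (by linarith : 0 ≤ 1 + μ)]

lemma abs_inner_le_of_mem_span_of_disjoint (hv : ∀ i, ‖v i‖ = 1)
    (hμ : Pairwise fun i j => |⟪v i, v j⟫| ≤ μ) (hμ0 : 0 ≤ μ) {k : ℕ}
    (hD : 0 < 1 - ((k : ℝ) - 1) * μ) {s t : Finset ι} (hs : #s ≤ k) (ht : #t ≤ k)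
    (hst : Disjoint s t) {x y : E} (hx : x ∈ Submodule.span ℝ (v '' s))
    (hy : y ∈ Submodule.span ℝ (v '' t)) (hx1 : ‖x‖ = 1) (hy1 : ‖y‖ = 1) :
    |⟪x, y⟫| ≤ k * μ / (1 - ((k : ℝ) - 1) * μ) := by
  obtain ⟨f, rfl⟩ := (Submodule.mem_span_image_finset_iff_exists_fun' ℝ).mp hx
  obtain ⟨g, rfl⟩ := (Submodule.mem_span_image_finset_iff_exists_fun' ℝ).mp hy
  set a := ∑ i ∈ s, |f i|
  set b := ∑ j ∈ t, |g j|
  have hf := mul_sq_sum_abs_le_mul_norm_sq hv hμ hμ0 hs f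
  have hg := mul_sq_sum_abs_le_mul_norm_sq hv hμ hμ0 ht g
  rw [hx1, one_pow, mul_one] at hf
  rw [hy1, one_pow, mul_one] at hg
  have hab : (1 - ((k : ℝ) - 1) * μ) * (a * b) ≤ k := by nlinarith [sq_nonneg (a - b)]
  calc |⟪∑ i ∈ s, f i • v i, ∑ j ∈ t, g j • v j⟫| ≤ μ * (a * b) :=
        abs_inner_sum_smul_sum_smul_le
          (fun i hi j hj => hμ (disjoint_iff_ne.mp hst i hi j hj)) f g
    _ ≤ k * μ / (1 - ((k : ℝ) - 1) * μ) := by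
        rw [le_div_iff₀ hD]
        linarith [mul_le_mul_of_nonneg_left hab hμ0]

end Coherence

theorem genCoherence_le_general {m N : ℕ} (A : Fin N → EuclideanSpace ℝ (Fin m)) (k : ℕ) (μ : ℝ)
    (hunit : ∀ i, ‖A i‖ = 1)
    (hcoh : ∀ i j, i ≠ j → |(inner ℝ (A i) (A j) : ℝ)| ≤ μ)
    (hμ0 : 0 ≤ μ) (hμ : μ < 1 / ((k : ℝ) - 1)) :
    genCoherence A k ≤ (k : ℝ) * μ / (1 - ((k : ℝ) - 1) * μ) := by
  have hD := one_sub_mul_pos_of_lt_one_div hμ0 hμ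
  refine Real.sSup_le ?_ (div_nonneg (by positivity) hD.le)
  rintro r ⟨I, J, hI, hJ, hIJ, u, hu, v, hv, hu1, hv1, rfl⟩
  exact abs_inner_le_of_mem_span_of_disjoint hunit hcoh hμ0 hD hI hJ hIJ hu hv hu1 hv1

/-- If the dictionary `A` has coherence `μ < 1/(k-1)` for an integer `k > 1`, then the
generalized coherence of degree `k` satisfies `μ_k(A) ≤ kμ/(1 - (k-1)μ)`. -/
theorem genCoherence_le {m N : ℕ} (A : Fin N → EuclideanSpace ℝ (Fin m)) (k : ℕ) (μ : ℝ)
    (hk : 1 < k)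
    (hunit : ∀ i, ‖A i‖ = 1)
    (hcoh : ∀ i j, i ≠ j → |(inner ℝ (A i) (A j) : ℝ)| ≤ μ)
    (hμ0 : 0 ≤ μ) (hμ : μ < 1 / ((k : ℝ) - 1)) :
    genCoherence A k ≤ (k : ℝ) * μ / (1 - ((k : ℝ) - 1) * μ) :=
  genCoherence_le_general A k μ hunit hcoh hμ0 hμ
end

section
/- For a fixed dictionary A, the generalized coherence μ_k(A) is non-decreasing in k, and μ_k(A) = 1 if and only if k ≥ ⌈spark(A)/2⌉. -/
/-- The spark of a dictionary: the smallest number of linearly dependent columns. -/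
noncomputable def spark {m N : ℕ} (A : Fin N → EuclideanSpace ℝ (Fin m)) : ℕ :=
  sInf {s : ℕ | ∃ S : Finset (Fin N), S.card = s ∧
    ¬ LinearIndependent ℝ (fun i : S => A i)}

/-! `μ_k(A)` is a maximum over finitely many compact sets, so `μ_k(A) = 1` iff unit vectors `u`, `v`
in the spans of disjoint column sets `I`, `J` with `|I|, |J| ≤ k` have `|⟪u, v⟫| = 1`, i.e.
`u = ±v`: iff the two spans meet. Spans that meet make `I ∪ J` a dependent set of at most `2k`
columns. Conversely, split a minimal dependent set of `s = spark A ≤ 2k` columns into halves of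
sizes `⌊s/2⌋, ⌈s/2⌉ ≤ k`: both halves are independent while their union is not, so their spans
meet. -/

open Submodule

section AbsCosines

variable {E : Type*} [NormedAddCommGroup E] [InnerProductSpace ℝ E]

/-- The values `|⟪u, v⟫|` over unit vectors `u ∈ U`, `v ∈ V`; the cosine of the first principal
angle between `U` and `V` is their supremum. -/
def absCosines (U V : Submodule ℝ E) : Set ℝ :=
  {r | ∃ u ∈ U, ∃ v ∈ V, ‖u‖ = 1 ∧ ‖v‖ = 1 ∧ r = |(inner ℝ u v : ℝ)|}

lemma absCosines_subset_Icc (U V : Submodule ℝ E) : absCosines U V ⊆ Set.Icc 0 1 := by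
  rintro _ ⟨u, -, v, -, hu, hv, rfl⟩
  exact ⟨abs_nonneg _, by simpa [hu, hv] using abs_real_inner_le_norm u v⟩

lemma one_mem_absCosines_iff {U V : Submodule ℝ E} : 1 ∈ absCosines U V ↔ ¬ Disjoint U V := by
  simp only [disjoint_def, not_forall, exists_prop]
  constructor
  · rintro ⟨u, hu, v, hv, hu1, hv1, h⟩
    have huv : u = v ∨ u = -v := by
      rcases eq_or_eq_neg_of_abs_eq h.symm with h | h
      · exact .inl ((inner_eq_one_iff_of_norm_eq_one hu1 hv1).1 h)
      · exact .inr ((inner_eq_neg_one_iff_of_norm_eq_one hu1 hv1).1 h)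
    refine ⟨u, hu, ?_, fun h0 => by simp [h0] at hu1⟩
    rcases huv with rfl | rfl
    exacts [hv, V.neg_mem hv]
  · rintro ⟨x, hxU, hxV, hx⟩
    have hx1 : ‖‖x‖⁻¹ • x‖ = 1 := norm_smul_inv_norm hx
    exact ⟨_, U.smul_mem _ hxU, _, V.smul_mem _ hxV, hx1, hx1, by
      rw [real_inner_self_eq_norm_sq, hx1]; norm_num⟩

lemma isCompact_absCosines [FiniteDimensional ℝ E] (U V : Submodule ℝ E) :
    IsCompact (absCosines U V) := by
  have hsphere (W : Submodule ℝ E) : IsCompact (Metric.sphere (0 : E) 1 ∩ W) :=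
    (isCompact_sphere _ _).inter_right W.closed_of_finiteDimensional
  have hcont : Continuous fun p : E × E => |(inner ℝ p.1 p.2 : ℝ)| := continuous_inner.abs
  convert ((hsphere U).prod (hsphere V)).image hcont using 1
  ext r
  simp only [absCosines, Set.mem_image, Set.mem_prod, Set.mem_inter_iff,
    mem_sphere_zero_iff_norm, SetLike.mem_coe, Prod.exists]
  constructor
  · rintro ⟨u, hu, v, hv, hu1, hv1, rfl⟩
    exact ⟨u, v, ⟨⟨hu1, hu⟩, hv1, hv⟩, rfl⟩
  · rintro ⟨u, v, ⟨⟨hu1, hu⟩, hv1, hv⟩, rfl⟩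
    exact ⟨u, hu, v, hv, hu1, hv1, rfl⟩

end AbsCosines

lemma Real.sSup_eq_one_iff {S : Set ℝ} (hS : IsCompact S) (hle : ∀ x ∈ S, x ≤ 1) :
    sSup S = 1 ↔ 1 ∈ S := by
  refine ⟨fun h => ?_, fun h => (IsGreatest.csSup_eq ⟨h, hle⟩)⟩
  obtain rfl | hne := S.eq_empty_or_nonempty
  · simp at h
  · exact h ▸ hS.sSup_mem hne

section Dictionary

variable {m N : ℕ} {A : Fin N → EuclideanSpace ℝ (Fin m)}

def coherenceSet (A : Fin N → EuclideanSpace ℝ (Fin m)) (k : ℕ) : Set ℝ :=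
  ⋃ (I : Finset (Fin N)) (J : Finset (Fin N)) (_ : I.card ≤ k ∧ J.card ≤ k ∧ Disjoint I J),
    absCosines (span ℝ (A '' I)) (span ℝ (A '' J))

lemma genCoherence_eq_sSup (k : ℕ) : genCoherence A k = sSup (coherenceSet A k) := by
  unfold genCoherence coherenceSet absCosines
  congr 1
  ext r
  simp only [Set.mem_ofPred_eq, Set.mem_iUnion, exists_prop, and_assoc]

lemma coherenceSet_subset_Icc (k : ℕ) : coherenceSet A k ⊆ Set.Icc 0 1 :=
  Set.iUnion₂_subset fun _ _ => Set.iUnion_subset fun _ => absCosines_subset_Icc _ _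

lemma coherenceSet_mono {k k' : ℕ} (h : k ≤ k') : coherenceSet A k ⊆ coherenceSet A k' :=
  Set.iUnion₂_mono fun _ _ => Set.iUnion_subset fun ⟨hI, hJ, hIJ⟩ =>
    Set.subset_iUnion_of_subset ⟨hI.trans h, hJ.trans h, hIJ⟩ subset_rfl

lemma isCompact_coherenceSet (k : ℕ) : IsCompact (coherenceSet A k) :=
  isCompact_iUnion fun _ => isCompact_iUnion fun _ => isCompact_iUnion fun _ =>
    isCompact_absCosines _ _

lemma genCoherence_mono {k k' : ℕ} (h : k ≤ k') : genCoherence A k ≤ genCoherence A k' := by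
  simp only [genCoherence_eq_sSup]
  exact Real.sSup_le
    (fun x hx => le_csSup ⟨1, fun y hy => (coherenceSet_subset_Icc k' hy).2⟩
      (coherenceSet_mono h hx))
    (Real.sSup_nonneg fun x hx => (coherenceSet_subset_Icc k' hx).1)

lemma genCoherence_eq_one_iff (k : ℕ) :
    genCoherence A k = 1 ↔ ∃ I J : Finset (Fin N), I.card ≤ k ∧ J.card ≤ k ∧ Disjoint I J ∧
      ¬ Disjoint (span ℝ (A '' I)) (span ℝ (A '' J)) := by
  rw [genCoherence_eq_sSup, Real.sSup_eq_one_iff (isCompact_coherenceSet k)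
    fun x hx => (coherenceSet_subset_Icc k hx).2]
  simp only [coherenceSet, Set.mem_iUnion, one_mem_absCosines_iff, exists_prop, and_assoc]

lemma spark_le_card {S : Finset (Fin N)} (h : ¬ LinearIndepOn ℝ A S) : spark A ≤ S.card :=
  Nat.sInf_le ⟨S, rfl, h⟩

lemma linearIndepOn_of_card_lt_spark {S : Finset (Fin N)} (h : S.card < spark A) :
    LinearIndepOn ℝ A S :=
  not_not.1 fun hS => h.not_ge (spark_le_card hS)

lemma exists_card_eq_spark (hdep : ¬ LinearIndependent ℝ A) :
    ∃ S : Finset (Fin N), S.card = spark A ∧ ¬ LinearIndepOn ℝ A S := by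
  refine Nat.sInf_mem (s := {s | ∃ S : Finset (Fin N), S.card = s ∧ ¬ LinearIndepOn ℝ A S})
    ⟨_, Finset.univ, rfl, ?_⟩
  rwa [Finset.coe_univ, linearIndepOn_univ_iff]

lemma two_le_spark (hA : ∀ i, A i ≠ 0) (hdep : ¬ LinearIndependent ℝ A) : 2 ≤ spark A := by
  obtain ⟨S, hS, hdepS⟩ := exists_card_eq_spark hdep
  by_contra! hlt
  obtain ⟨i, hi⟩ : S.Nonempty := Finset.nonempty_iff_ne_empty.2 fun h => hdepS (by simp [h])
  have hSi : (S : Set (Fin N)) ⊆ {i} := fun j hj =>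
    Finset.card_le_one.1 (by omega) j hj i hi
  exact hdepS (((linearIndepOn_singleton_iff ℝ).2 (hA i)).mono hSi)

lemma spark_le_two_mul_iff (hA : ∀ i, A i ≠ 0) (hdep : ¬ LinearIndependent ℝ A) (k : ℕ) :
    spark A ≤ 2 * k ↔ ∃ I J : Finset (Fin N), I.card ≤ k ∧ J.card ≤ k ∧ Disjoint I J ∧
      ¬ Disjoint (span ℝ (A '' I)) (span ℝ (A '' J)) := by
  constructor
  · intro hk
    obtain ⟨S, hS, hdepS⟩ := exists_card_eq_spark hdep
    have h2 := two_le_spark hA hdep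
    obtain ⟨I, hIS, hI⟩ := Finset.exists_subset_card_eq (s := S) (n := spark A / 2) (by omega)
    have hJ : (S \ I).card = spark A - spark A / 2 := by
      rw [Finset.card_sdiff_of_subset hIS, hI, hS]
    refine ⟨I, S \ I, by omega, by omega, Finset.disjoint_sdiff, fun hspan => hdepS ?_⟩
    rw [← Finset.union_sdiff_of_subset hIS, Finset.coe_union]
    exact (linearIndepOn_union_iff (Finset.disjoint_coe.2 Finset.disjoint_sdiff)).2
      ⟨linearIndepOn_of_card_lt_spark (by omega), linearIndepOn_of_card_lt_spark (by omega),
        hspan⟩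
  · rintro ⟨I, J, hI, hJ, hIJ, hspan⟩
    have hdepIJ : ¬ LinearIndepOn ℝ A (I ∪ J : Finset (Fin N)) := by
      rw [Finset.coe_union, linearIndepOn_union_iff (Finset.disjoint_coe.2 hIJ)]
      exact fun h => hspan h.2.2
    exact (spark_le_card hdepIJ).trans ((Finset.card_union_le I J).trans (by omega))

end Dictionary

/-- For a fixed dictionary `A` (whose columns are unit vectors and linearly dependent, so
that the spark is finite), the generalized coherence `μ_k(A)` is non-decreasing in `k`, and
`μ_k(A) = 1` if and only if `k ≥ ⌈spark(A)/2⌉`. -/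
theorem genCoherence_monotone_and_spark {m N : ℕ}
    (A : Fin N → EuclideanSpace ℝ (Fin m))
    (hunit : ∀ i, ‖A i‖ = 1)
    (hdep : ¬ LinearIndependent ℝ A) :
    (∀ k k' : ℕ, k ≤ k' → genCoherence A k ≤ genCoherence A k') ∧
    (∀ k : ℕ, 1 ≤ k → (genCoherence A k = 1 ↔ ⌈((spark A : ℝ) / 2 : ℝ)⌉ ≤ (k : ℤ))) := by
  have hA : ∀ i, A i ≠ 0 := fun i => norm_ne_zero_iff.1 (by simp [hunit i])
  refine ⟨fun k k' => genCoherence_mono, fun k _ => ?_⟩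
  rw [genCoherence_eq_one_iff, ← spark_le_two_mul_iff hA hdep, Int.ceil_le, Int.cast_natCast,
    div_le_iff₀ two_pos, mul_comm]
  norm_cast
end
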